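/- Let γ > 0, B ∈ [0,1], w = (w₁,w₂), z = (z₁,z₂) ∈ ℝ², and assume the following inequalities: (i) 2γ > (1−B)|z|² + (w·z); (ii) γ² > γ((1−B)|z|² + (w·z)) + (w₁z₂ − w₂z₁)²/4; (iii) γ > B|z|²; (iv) 2γ(1−B) > (1 − 3B(1−B))|z|² + 2(1−2B)(w·z) + |w|²; (v) γ²(1−B)² > γ(1−B)·((1−3B(1−B))|z|² + |w|² + 2(1−2B)(w·z)) − ((1−3B(1−B))z₁² + 2(1−2B)w₁z₁ + w₁²)·((1−3B(1−B))z₂² + 2(1−2B)w₂z₂ + w₂²) + ((1−3B(1−B))z₁z₂ + (1−2B)(w₁z₂ + w₂z₁) + w₁w₂)². Then for every ξ ∈ ℝ² ∖ {0} one has Δ₁(ξ) < 0, Δ₂(ξ) > 0 and Δ₃(ξ) < 0, while Δ₁(0) = Δ₂(0) = Δ₃(0) = 0; i.e. ξ = (0,0) is a strict global maximum point of Δ₁ and of Δ₃ and a strict global minimum point of Δ₂. -/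
import Mathlib


/-- `Δ₁(ξ) := (1−B)(z·ξ)² − γ|ξ|² + (w·ξ)(z·ξ)`. -/
noncomputable def D1 (γ B w1 w2 z1 z2 ξ1 ξ2 : ℝ) : ℝ :=
  (1 - B) * (z1 * ξ1 + z2 * ξ2) ^ 2 - γ * (ξ1 ^ 2 + ξ2 ^ 2) +
    (w1 * ξ1 + w2 * ξ2) * (z1 * ξ1 + z2 * ξ2)

/-- `Δ₂(ξ) := γ|ξ|² − B(z·ξ)²`. -/
noncomputable def D2 (γ B z1 z2 ξ1 ξ2 : ℝ) : ℝ :=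
  γ * (ξ1 ^ 2 + ξ2 ^ 2) - B * (z1 * ξ1 + z2 * ξ2) ^ 2

/-- `Δ₃(ξ) := (1 − 3B(1−B))(z·ξ)² + (w·ξ)² − γ(1−B)|ξ|² + 2(1−2B)(w·ξ)(z·ξ)`. -/
noncomputable def D3 (γ B w1 w2 z1 z2 ξ1 ξ2 : ℝ) : ℝ :=
  (1 - 3 * B * (1 - B)) * (z1 * ξ1 + z2 * ξ2) ^ 2 + (w1 * ξ1 + w2 * ξ2) ^ 2 -
    γ * (1 - B) * (ξ1 ^ 2 + ξ2 ^ 2) +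
    2 * (1 - 2 * B) * (w1 * ξ1 + w2 * ξ2) * (z1 * ξ1 + z2 * ξ2)


lemma negdef (a b c x y : ℝ) (htr : a + c < 0) (hdet : b ^ 2 < a * c)
    (h : x ≠ 0 ∨ y ≠ 0) : a * x ^ 2 + 2 * b * x * y + c * y ^ 2 < 0 := by
  have ha : a < 0 := by nlinarith [sq_nonneg b]
  rcases eq_or_ne y 0 with hy | hy
  · subst hy
    have hx : x ≠ 0 := h.resolve_right (by simp)
    have : 0 < x ^ 2 := by positivity
    nlinarith
  · have hy2 : 0 < y ^ 2 := by positivity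
    nlinarith [sq_nonneg (a * x + b * y), mul_pos (sub_pos.mpr hdet) hy2]

lemma posdef (a b c x y : ℝ) (htr : 0 < a + c) (hdet : b ^ 2 < a * c)
    (h : x ≠ 0 ∨ y ≠ 0) : 0 < a * x ^ 2 + 2 * b * x * y + c * y ^ 2 := by
  have := negdef (-a) (-b) (-c) x y (by linarith) (by nlinarith) h
  nlinarith

/-- Under the inequalities (i)–(v) on `γ, B, w, z`, the origin `ξ = (0,0)` is a strict
global maximum point of `Δ₁` and `Δ₃` and a strict global minimum point of `Δ₂`:
`Δ₁(ξ) < 0`, `Δ₂(ξ) > 0`, `Δ₃(ξ) < 0` for every `ξ ≠ 0`, while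
`Δ₁(0) = Δ₂(0) = Δ₃(0) = 0`. -/
theorem stmt14 (γ B w1 w2 z1 z2 : ℝ) (hγ : 0 < γ) (hB0 : 0 ≤ B) (hB1 : B ≤ 1)
    (h1 : 2 * γ > (1 - B) * (z1 ^ 2 + z2 ^ 2) + (w1 * z1 + w2 * z2))
    (h2 : γ ^ 2 > γ * ((1 - B) * (z1 ^ 2 + z2 ^ 2) + (w1 * z1 + w2 * z2)) +
      (w1 * z2 - w2 * z1) ^ 2 / 4)
    (h3 : γ > B * (z1 ^ 2 + z2 ^ 2))
    (h4 : 2 * γ * (1 - B) > (1 - 3 * B * (1 - B)) * (z1 ^ 2 + z2 ^ 2) +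
      2 * (1 - 2 * B) * (w1 * z1 + w2 * z2) + (w1 ^ 2 + w2 ^ 2))
    (h5 : γ ^ 2 * (1 - B) ^ 2 >
      γ * (1 - B) * ((1 - 3 * B * (1 - B)) * (z1 ^ 2 + z2 ^ 2) + (w1 ^ 2 + w2 ^ 2) +
        2 * (1 - 2 * B) * (w1 * z1 + w2 * z2))
      - ((1 - 3 * B * (1 - B)) * z1 ^ 2 + 2 * (1 - 2 * B) * w1 * z1 + w1 ^ 2) *
          ((1 - 3 * B * (1 - B)) * z2 ^ 2 + 2 * (1 - 2 * B) * w2 * z2 + w2 ^ 2)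
      + ((1 - 3 * B * (1 - B)) * z1 * z2 + (1 - 2 * B) * (w1 * z2 + w2 * z1) +
          w1 * w2) ^ 2) :
    (∀ ξ1 ξ2 : ℝ, (ξ1, ξ2) ≠ (0, 0) →
      D1 γ B w1 w2 z1 z2 ξ1 ξ2 < 0 ∧ 0 < D2 γ B z1 z2 ξ1 ξ2 ∧
      D3 γ B w1 w2 z1 z2 ξ1 ξ2 < 0) ∧
    D1 γ B w1 w2 z1 z2 0 0 = 0 ∧ D2 γ B z1 z2 0 0 = 0 ∧ D3 γ B w1 w2 z1 z2 0 0 = 0 := by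
  refine ⟨fun ξ1 ξ2 hne => ?_, by simp [D1], by simp [D2], by simp [D3]⟩
  have hor : ξ1 ≠ 0 ∨ ξ2 ≠ 0 := by
    by_contra hc
    push_neg at hc
    exact hne (by simp [hc.1, hc.2])
  refine ⟨?_, ?_, ?_⟩
  · have := negdef ((1 - B) * z1 ^ 2 + w1 * z1 - γ)
      ((1 - B) * z1 * z2 + (w1 * z2 + w2 * z1) / 2)
      ((1 - B) * z2 ^ 2 + w2 * z2 - γ) ξ1 ξ2 (by linarith) (by nlinarith) hor
    have heq : D1 γ B w1 w2 z1 z2 ξ1 ξ2 =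
        ((1 - B) * z1 ^ 2 + w1 * z1 - γ) * ξ1 ^ 2 +
        2 * ((1 - B) * z1 * z2 + (w1 * z2 + w2 * z1) / 2) * ξ1 * ξ2 +
        ((1 - B) * z2 ^ 2 + w2 * z2 - γ) * ξ2 ^ 2 := by
      unfold D1; ring
    linarith [heq ▸ this]
  · have := posdef (γ - B * z1 ^ 2) (-(B * z1 * z2)) (γ - B * z2 ^ 2) ξ1 ξ2
      (by nlinarith) (by nlinarith [sq_nonneg (z1*z2), mul_nonneg hB0 (sq_nonneg z1)]) hor
    have heq : D2 γ B z1 z2 ξ1 ξ2 =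
        (γ - B * z1 ^ 2) * ξ1 ^ 2 + 2 * (-(B * z1 * z2)) * ξ1 * ξ2 +
        (γ - B * z2 ^ 2) * ξ2 ^ 2 := by
      unfold D2; ring
    linarith [heq ▸ this]
  · have := negdef
      ((1 - 3 * B * (1 - B)) * z1 ^ 2 + 2 * (1 - 2 * B) * w1 * z1 + w1 ^ 2 - γ * (1 - B))
      ((1 - 3 * B * (1 - B)) * z1 * z2 + (1 - 2 * B) * (w1 * z2 + w2 * z1) + w1 * w2)
      ((1 - 3 * B * (1 - B)) * z2 ^ 2 + 2 * (1 - 2 * B) * w2 * z2 + w2 ^ 2 - γ * (1 - B))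
      ξ1 ξ2 (by linarith) (by nlinarith) hor
    have heq : D3 γ B w1 w2 z1 z2 ξ1 ξ2 =
        ((1 - 3 * B * (1 - B)) * z1 ^ 2 + 2 * (1 - 2 * B) * w1 * z1 + w1 ^ 2 - γ * (1 - B)) * ξ1 ^ 2 +
        2 * ((1 - 3 * B * (1 - B)) * z1 * z2 + (1 - 2 * B) * (w1 * z2 + w2 * z1) + w1 * w2) * ξ1 * ξ2 +
        ((1 - 3 * B * (1 - B)) * z2 ^ 2 + 2 * (1 - 2 * B) * w2 * z2 + w2 ^ 2 - γ * (1 - B)) * ξ2 ^ 2 := by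
      unfold D3; ring
    linarith [heq ▸ this]
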